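/- arXiv:1604.07015 — 5 statements merged into one kernel-verified Lean document; each statement's English description precedes it below -/
import Mathlib

section
/- For every positive integer n, the sum over k from 0 to n of k·χ_n(k) equals n, where χ_n(k) = ∏_{j=1}^{k} (1 - (j-1)/n) (with χ_n(0) = 1). -/
/-- χ_n(k) = ∏_{j=1}^{k} (1 - (j-1)/n). -/
noncomputable def chi (n k : ℕ) : ℝ := ∏ j ∈ Finset.range k, (1 - (j : ℝ) / n)

lemma chi_succ (n k : ℕ) : chi n (k + 1) = chi n k * (1 - (k : ℝ) / n) := by
  simp [chi, Finset.prod_range_succ]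

theorem sum_k_chi (n : ℕ) (hn : 1 ≤ n) :
    ∑ k ∈ Finset.range (n + 1), (k : ℝ) * chi n k = n := by
  have hn0 : (n : ℝ) ≠ 0 := by positivity
  have key : ∀ k : ℕ, (k : ℝ) * chi n k = (n : ℝ) * (chi n k - chi n (k + 1)) := by
    intro k
    rw [chi_succ]
    field_simp
    ring
  calc ∑ k ∈ Finset.range (n + 1), (k : ℝ) * chi n k
      = ∑ k ∈ Finset.range (n + 1), (n : ℝ) * (chi n k - chi n (k + 1)) := by
        simp only [key]
    _ = (n : ℝ) * ∑ k ∈ Finset.range (n + 1), (chi n k - chi n (k + 1)) := by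
        rw [Finset.mul_sum]
    _ = (n : ℝ) * (chi n 0 - chi n (n + 1)) := by
        rw [Finset.sum_range_sub' (fun k => chi n k)]
    _ = n := by
        have h1 : chi n 0 = 1 := by simp [chi]
        have h2 : chi n (n + 1) = 0 := by
          rw [chi_succ]
          simp [hn0]
        rw [h1, h2]; ring
end

section
/- For any integer n ≥ 1 and all real x with 0 ≤ x ≤ n, |(1 - x/n)^n - e^{-x}| ≤ 1/(e·n). -/
/-!
The gap `g(y) = e^{-y} - (1 - y/n)^n` is nonnegative on `[0, n]`, so it suffices to bound it at
a maximiser `c`. At an interior maximiser `g'(c) = (1 - c/n)^{n-1} - e^{-c} = 0`, hence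
`g(c) = e^{-c} - e^{-c}(1 - c/n) = (c/n) e^{-c}`; the same formula holds at both endpoints.
Finally `c e^{-c} ≤ e^{-1}`.
-/

open Real Set

noncomputable def expGap (n : ℕ) (y : ℝ) : ℝ := exp (-y) - (1 - y / n) ^ n

namespace expGap

variable {n : ℕ}

theorem nonneg {y : ℝ} (hy : y ≤ n) : 0 ≤ expGap n y :=
  sub_nonneg.mpr (one_sub_div_pow_le_exp_neg hy)

theorem continuous : Continuous (expGap n) := by
  unfold expGap; fun_prop

theorem hasDerivAt (hn : n ≠ 0) (y : ℝ) :
    HasDerivAt (expGap n) ((1 - y / n) ^ (n - 1) - exp (-y)) y := by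
  have hexp : HasDerivAt (fun y : ℝ => exp (-y)) (-exp (-y)) y := by
    simpa using (hasDerivAt_neg y).exp
  have hpow : HasDerivAt (fun y : ℝ => (1 - y / n) ^ n) (-(1 - y / n) ^ (n - 1)) y := by
    have : (n : ℝ) ≠ 0 := Nat.cast_ne_zero.mpr hn
    exact ((((hasDerivAt_id' y).div_const (n : ℝ)).const_sub 1).fun_pow n).congr_deriv
      (by field_simp)
  exact (hexp.sub hpow).congr_deriv (by ring)

theorem eq_div_mul_exp_of_isLocalMax (hn : n ≠ 0) {c : ℝ} (hc : IsLocalMax (expGap n) c) :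
    expGap n c = c / n * exp (-c) := by
  have hcrit : (1 - c / n) ^ (n - 1) = exp (-c) :=
    sub_eq_zero.mp ((hasDerivAt hn c).deriv ▸ hc.deriv_eq_zero)
  have hsucc : (1 - c / n) ^ n = (1 - c / n) ^ (n - 1) * (1 - c / n) := by
    rw [← pow_succ, Nat.sub_add_cancel (Nat.one_le_iff_ne_zero.mpr hn)]
  rw [expGap, hsucc, hcrit]
  ring

theorem eq_div_mul_exp_of_isMaxOn (hn : n ≠ 0) {c : ℝ} (hc : c ∈ Icc 0 (n : ℝ))
    (hmax : IsMaxOn (expGap n) (Icc 0 n) c) : expGap n c = c / n * exp (-c) := by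
  obtain rfl | hc0 := hc.1.eq_or_lt
  · simp [expGap]
  obtain hcn | hcn := hc.2.eq_or_lt
  · have : (n : ℝ) ≠ 0 := Nat.cast_ne_zero.mpr hn
    simp [expGap, hcn, this, hn]
  · exact eq_div_mul_exp_of_isLocalMax hn (hmax.isLocalMax (Icc_mem_nhds hc0 hcn))

end expGap

theorem exp_approx_bound (n : ℕ) (hn : 1 ≤ n) (x : ℝ) (hx0 : 0 ≤ x) (hxn : x ≤ n) :
    |(1 - x / n) ^ n - Real.exp (-x)| ≤ 1 / (Real.exp 1 * n) := by
  have hn0 : n ≠ 0 := Nat.one_le_iff_ne_zero.mp hn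
  obtain ⟨c, hc, hmax⟩ := isCompact_Icc.exists_isMaxOn (nonempty_Icc.mpr (hx0.trans hxn))
    expGap.continuous.continuousOn
  rw [abs_sub_comm, ← expGap, abs_of_nonneg (expGap.nonneg hxn)]
  calc expGap n x ≤ expGap n c := hmax ⟨hx0, hxn⟩
    _ = c * exp (-c) / n := by
      rw [expGap.eq_div_mul_exp_of_isMaxOn hn0 hc hmax, div_mul_eq_mul_div]
    _ ≤ exp (-1) / n := by gcongr; exact mul_exp_neg_le_exp_neg_one c
    _ = 1 / (exp 1 * n) := by rw [exp_neg, div_eq_mul_inv, one_div, mul_inv]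
end

section
/- For real x with −κ < x < 1 (where κ > 1 solves κ·log κ − κ = 1), lim_{n→∞} ∑_{k=0}^{n} χ_n(k)·x^k = 1/(1−x). In particular the geometric series is χ-summable to 1/(1−x) throughout (−κ, 1), a strictly larger domain than (−1, 1). -/
open MeasureTheory Real Set Filter Finset Topology

lemma abs_one_sub_le_exp_div {κ u : ℝ} (hκ0 : 0 < κ) (hκ : κ * log κ - κ ≤ 1) (hu : 0 ≤ u) :
    |1 - u| ≤ exp (u / κ) := by
  rcases le_or_gt u 2 with hu2 | hu2
  · calc |1 - u| ≤ 1 := abs_le.mpr ⟨by linarith, by linarith⟩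
      _ ≤ exp (u / κ) := one_le_exp (by positivity)
  · have hu1 : 0 < u - 1 := by linarith
    -- `log κ ≤ 1 + 1/κ` is exactly what makes `log (u - 1) ≤ u / κ` follow from `log y ≤ y - 1`
    have hlogκ : log κ ≤ 1 + 1 / κ := by
      rw [← sub_nonneg]
      have : 0 ≤ (1 + 1 / κ - log κ) * κ := by field_simp; linarith
      exact nonneg_of_mul_nonneg_left this hκ0
    have hlog : log (u - 1) ≤ u / κ := by
      have h := log_le_sub_one_of_pos (div_pos hu1 hκ0)
      rw [log_div hu1.ne' hκ0.ne'] at h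
      have : (u - 1) / κ - 1 + (1 + 1 / κ) = u / κ := by field_simp; ring
      linarith
    calc |1 - u| = exp (log (u - 1)) := by
          rw [exp_log hu1, abs_sub_comm, abs_of_pos hu1]
      _ ≤ exp (u / κ) := exp_le_exp.mpr hlog

lemma abs_one_add_le_exp_max {κ : ℝ} (hκ0 : 0 < κ) (hκ : κ * log κ - κ ≤ 1) (s : ℝ) :
    |1 + s| ≤ exp (max s (-s / κ)) := by
  rcases le_or_gt 0 s with hs | hs
  · rw [abs_of_nonneg (by linarith)]
    exact (add_comm 1 s ▸ add_one_le_exp s).trans (exp_le_exp.mpr (le_max_left _ _))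
  · have h := abs_one_sub_le_exp_div hκ0 hκ (neg_nonneg.mpr hs.le)
    rw [sub_neg_eq_add] at h
    exact h.trans (exp_le_exp.mpr (le_max_right _ _))

lemma abs_one_add_div_pow_le_exp_max {κ : ℝ} (hκ0 : 0 < κ) (hκ : κ * log κ - κ ≤ 1) (y : ℝ)
    {n : ℕ} (hn : n ≠ 0) : |1 + y / n| ^ n ≤ exp (max y (-y / κ)) := by
  have hn' : (n : ℝ) ≠ 0 := Nat.cast_ne_zero.mpr hn
  have hmax : max (y / n) (-(y / n) / κ) = max y (-y / κ) / n := by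
    rw [div_eq_mul_inv (max _ _), max_mul_of_nonneg _ _ (inv_nonneg.mpr n.cast_nonneg)]
    congr 1; ring
  calc |1 + y / n| ^ n ≤ exp (max y (-y / κ) / n) ^ n :=
        pow_le_pow_left₀ (abs_nonneg _) (hmax ▸ abs_one_add_le_exp_max hκ0 hκ _) n
    _ = exp (max y (-y / κ)) := by rw [← exp_nat_mul, mul_div_cancel₀ _ hn']

lemma chi_mul_pow (n k : ℕ) : chi n k * (n : ℝ) ^ k = n.descFactorial k := by
  rw [← descPochhammer_eval_eq_descFactorial ℝ, descPochhammer_eval_eq_prod_range, chi,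
    pow_eq_prod_const, ← prod_mul_distrib]
  rcases eq_or_ne n 0 with rfl | hn
  · rcases k with _ | k
    · simp
    · simp [prod_range_succ']
  · refine prod_congr rfl fun j _ => ?_
    field_simp

lemma pow_mul_exp_neg_eq_Gamma_integrand (k : ℕ) :
    (fun t : ℝ => t ^ k * exp (-t)) = fun t => exp (-t) * t ^ ((k + 1 : ℝ) - 1) := by
  funext t
  rw [add_sub_cancel_right, rpow_natCast, mul_comm]

lemma integrableOn_pow_mul_exp_neg (k : ℕ) :
    IntegrableOn (fun t : ℝ => t ^ k * exp (-t)) (Ioi 0) := by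
  rw [pow_mul_exp_neg_eq_Gamma_integrand]
  exact GammaIntegral_convergent (by positivity)

lemma integral_pow_mul_exp_neg (k : ℕ) : ∫ t in Ioi (0 : ℝ), t ^ k * exp (-t) = k.factorial := by
  rw [pow_mul_exp_neg_eq_Gamma_integrand, ← Gamma_eq_integral (by positivity),
    Gamma_nat_eq_factorial]

lemma sum_chi_mul_pow_eq_integral {n : ℕ} (hn : n ≠ 0) (x : ℝ) :
    ∑ k ∈ range (n + 1), chi n k * x ^ k = ∫ t in Ioi (0 : ℝ), (1 + t * x / n) ^ n * exp (-t) := by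
  have hn' : (n : ℝ) ≠ 0 := Nat.cast_ne_zero.mpr hn
  have binomial : ∀ t : ℝ, (1 + t * x / n) ^ n * exp (-t) =
      ∑ k ∈ range (n + 1), (n.choose k * (x / n) ^ k) * (t ^ k * exp (-t)) := by
    intro t
    rw [add_comm, add_pow, sum_mul]
    refine sum_congr rfl fun k _ => ?_
    rw [one_pow, mul_one, mul_div_assoc, mul_pow]
    ring
  simp_rw [binomial]
  rw [integral_finsetSum _ fun k _ => (integrableOn_pow_mul_exp_neg k).const_mul _]
  refine sum_congr rfl fun k _ => ?_
  have h := chi_mul_pow n k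
  rw [Nat.descFactorial_eq_factorial_mul_choose, Nat.cast_mul] at h
  rw [integral_const_mul, integral_pow_mul_exp_neg, div_pow, mul_right_comm,
    mul_comm (n.choose k : ℝ), ← h]
  field_simp

lemma integral_exp_mul_mul_exp_neg {x : ℝ} (hx : x < 1) :
    ∫ t in Ioi (0 : ℝ), exp (t * x) * exp (-t) = 1 / (1 - x) := by
  have h := integral_exp_mul_Ioi (sub_neg.mpr hx) 0
  simp_rw [← exp_add]
  rw [mul_zero, exp_zero, neg_div, ← div_neg, neg_sub] at h
  convert h using 4 with t
  ring

lemma tendsto_integral_one_add_div_pow_mul_exp_neg {x c : ℝ} (hc : c < 1)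
    (hbound : ∀ n : ℕ, n ≠ 0 → ∀ t : ℝ, 0 < t → |1 + t * x / n| ^ n ≤ exp (c * t)) :
    Tendsto (fun n : ℕ => ∫ t in Ioi (0 : ℝ), (1 + t * x / n) ^ n * exp (-t)) atTop
      (𝓝 (∫ t in Ioi (0 : ℝ), exp (t * x) * exp (-t))) := by
  refine tendsto_integral_filter_of_dominated_convergence (fun t => exp (-(1 - c) * t))
    (Eventually.of_forall fun n => (by fun_prop : Continuous _).aestronglyMeasurable) ?_
    (exp_neg_integrableOn_Ioi 0 (sub_pos.mpr hc)) ?_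
  · filter_upwards [eventually_ne_atTop 0] with n hn
    refine (ae_restrict_iff' measurableSet_Ioi).mpr (Eventually.of_forall fun t ht => ?_)
    calc ‖(1 + t * x / n) ^ n * exp (-t)‖ = |1 + t * x / n| ^ n * exp (-t) := by
          rw [norm_mul, norm_pow, norm_of_nonneg (exp_pos _).le, norm_eq_abs]
      _ ≤ exp (c * t) * exp (-t) := by gcongr; exact hbound n hn t ht
      _ = exp (-(1 - c) * t) := by rw [← exp_add]; ring_nf
  · exact Eventually.of_forall fun t => (tendsto_one_add_div_pow_exp (t * x)).mul_const _

theorem chi_geometric_summable (κ : ℝ) (hκ1 : 1 < κ) (hκ : κ * Real.log κ - κ = 1)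
    (x : ℝ) (hx1 : -κ < x) (hx2 : x < 1) :
    Filter.Tendsto (fun n : ℕ => ∑ k ∈ Finset.range (n + 1), chi n k * x ^ k)
      Filter.atTop (nhds (1 / (1 - x))) := by
  have hκ0 : 0 < κ := by linarith
  have hc : max x (-x / κ) < 1 := max_lt hx2 (by rw [div_lt_one hκ0]; linarith)
  have hbound : ∀ n : ℕ, n ≠ 0 → ∀ t : ℝ, 0 < t →
      |1 + t * x / n| ^ n ≤ exp (max x (-x / κ) * t) := by
    intro n hn t ht
    convert abs_one_add_div_pow_le_exp_max hκ0 hκ.le (t * x) hn using 2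
    rw [max_mul_of_nonneg _ _ ht.le]
    congr 1 <;> ring
  rw [← integral_exp_mul_mul_exp_neg hx2]
  refine (tendsto_integral_one_add_div_pow_mul_exp_neg hc hbound).congr' ?_
  filter_upwards [eventually_ne_atTop 0] with n hn
  exact (sum_chi_mul_pow_eq_integral hn x).symm
end

section
/- For real x ≤ −κ, where κ solves κ·log κ − κ = 1, the limit lim_{n→∞} ∑_{k=0}^{n} χ_n(k)·x^k does not exist (the partial χ-sums are unbounded). -/
/-!
Reversing the order of summation gives
`∑_{k ≤ n} χ_n(k) x^k = n! (x/n)^n ∑_{m ≤ n} (n/x)^m / m!`.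
For `x = -z` and `n` even, the last sum is an even-degree Taylor polynomial of `exp` at the
nonpositive point `-n/z`, hence at least `e^{-n/z}`. With Stirling's bound
`n! ≥ √(2πn) (n/e)^n` the partial sum is at least `√(2πn) exp (n (log z - 1 - 1/z))`, and the
exponent is nonnegative for `z ≥ κ`. So the partial sums along even `n` grow at least like `√n`.
-/

open Real Finset Set Nat Filter

theorem chi_mul_pow_eq_descFactorial {n k : ℕ} (hk : k ≤ n) :
    chi n k * n ^ k = n.descFactorial k := by
  rw [chi, pow_eq_prod_const, ← prod_mul_distrib, descFactorial_eq_prod_range, cast_prod]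
  refine prod_congr rfl fun j hj => ?_
  have hjn : j < n := (mem_range.1 hj).trans_le hk
  have hn : (n : ℝ) ≠ 0 := by exact_mod_cast ((zero_le j).trans_lt hjn).ne'
  rw [cast_sub hjn.le, sub_mul, div_mul_cancel₀ _ hn, one_mul]

theorem sum_chi_mul_pow {n : ℕ} (hn : n ≠ 0) {x : ℝ} (hx : x ≠ 0) :
    ∑ k ∈ range (n + 1), chi n k * x ^ k =
      n ! * (x / n) ^ n * ∑ m ∈ range (n + 1), (n / x) ^ m / m ! := by
  rw [mul_sum, ← sum_range_reflect]
  refine sum_congr rfl fun m hm => ?_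
  have hmn : m ≤ n := mem_range_succ_iff.1 hm
  have hfact : chi n (n - m) * n ^ (n - m) * m ! = n ! := by
    have h := factorial_mul_descFactorial (n.sub_le m)
    rw [Nat.sub_sub_self hmn] at h
    rw [chi_mul_pow_eq_descFactorial (n.sub_le m), ← h]
    push_cast
    ring
  rw [add_tsub_cancel_right, ← hfact, div_pow, div_pow, ← pow_sub_mul_pow x hmn,
    ← pow_sub_mul_pow (n : ℝ) hmn]
  field_simp

theorem Real.exp_le_sum_of_nonpos_of_even {x : ℝ} (hx : x ≤ 0) {n : ℕ} (hn : Even n) :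
    exp x ≤ ∑ m ∈ range (n + 1), x ^ m / m ! := by
  rcases hx.lt_or_eq with hx | rfl
  · obtain ⟨y, -, hy⟩ := taylor_mean_remainder_lagrange_iteratedDeriv hx.ne'
      (contDiff_exp (n := n + 1)).contDiffOn
    have htaylor : taylorWithinEval exp n (uIcc 0 x) 0 x = ∑ m ∈ range (n + 1), x ^ m / m ! := by
      refine (taylor_within_apply _ _ _ _ _).trans (sum_congr rfl fun m _ => ?_)
      rw [iteratedDerivWithin_eq_iteratedDeriv (uniqueDiffOn_uIcc hx.ne') contDiff_exp.contDiffAt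
        left_mem_uIcc, iteratedDeriv_eq_iterate, iter_deriv_exp, exp_zero, sub_zero, smul_eq_mul,
        mul_one, inv_mul_eq_div]
    rw [htaylor, iteratedDeriv_eq_iterate, iter_deriv_exp, sub_zero] at hy
    have hrem : exp y * x ^ (n + 1) / (n + 1)! ≤ 0 :=
      div_nonpos_of_nonpos_of_nonneg
        (mul_nonpos_of_nonneg_of_nonpos (exp_pos y).le (hn.add_one.pow_nonpos hx.le))
        (by positivity)
    linarith
  · simp [sum_range_succ', zero_pow_eq]

theorem sqrt_two_pi_mul_exp_le_sum_chi_mul_neg_pow {z : ℝ} (hz : 0 < z) {n : ℕ} (hn : Even n) :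
    √(2 * π * n) * exp (n * (log z - 1 - z⁻¹)) ≤ ∑ k ∈ range (n + 1), chi n k * (-z) ^ k := by
  rcases eq_or_ne n 0 with rfl | hn0
  · simp [chi]
  have htaylor : exp (-(n / z)) ≤ ∑ m ∈ range (n + 1), (n / -z) ^ m / m ! := by
    rw [div_neg]
    exact exp_le_sum_of_nonpos_of_even (neg_nonpos.2 (by positivity)) hn
  calc √(2 * π * n) * exp (n * (log z - 1 - z⁻¹))
      = √(2 * π * n) * (n / exp 1) ^ n * (z / n) ^ n * exp (-(n / z)) := by
        have hn' : (n : ℝ) ≠ 0 := by exact_mod_cast hn0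
        rw [show (n : ℝ) * (log z - 1 - z⁻¹) = n * log z - n * 1 + -(n / z) by ring, exp_add,
          exp_sub, exp_nat_mul, exp_nat_mul, exp_log hz]
        rw [div_pow, div_pow]
        field_simp
    _ ≤ n ! * (z / n) ^ n * exp (-(n / z)) := by
        gcongr
        exact Stirling.le_factorial_stirling n
    _ ≤ n ! * (z / n) ^ n * ∑ m ∈ range (n + 1), (n / -z) ^ m / m ! := by gcongr
    _ = ∑ k ∈ range (n + 1), chi n k * (-z) ^ k := by
        rw [sum_chi_mul_pow hn0 (neg_ne_zero.2 hz.ne'), neg_div, hn.neg_pow]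

theorem log_sub_one_sub_inv_nonneg {κ z : ℝ} (hκ0 : 0 < κ) (hκ : κ * log κ - κ = 1)
    (hz : κ ≤ z) : 0 ≤ log z - 1 - z⁻¹ := by
  have hlogκ : log κ = 1 + κ⁻¹ := by
    field_simp
    linarith
  have := log_le_log hκ0 hz
  have := inv_anti₀ hκ0 hz
  linarith

theorem tendsto_sum_chi_mul_neg_pow_two_mul_atTop {z : ℝ} (hz : 0 < z)
    (hgrowth : 0 ≤ log z - 1 - z⁻¹) :
    Tendsto (fun m : ℕ => ∑ k ∈ range (2 * m + 1), chi (2 * m) k * (-z) ^ k) atTop atTop := by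
  have hsqrt : Tendsto (fun m : ℕ => √(2 * π * (2 * m : ℕ))) atTop atTop := by
    refine tendsto_sqrt_atTop.comp (Tendsto.const_mul_atTop (by positivity) ?_)
    exact tendsto_natCast_atTop_atTop.comp (tendsto_id.const_mul_atTop' two_pos)
  refine tendsto_atTop_mono (fun m => ?_) hsqrt
  calc √(2 * π * (2 * m : ℕ))
      ≤ √(2 * π * (2 * m : ℕ)) * exp ((2 * m : ℕ) * (log z - 1 - z⁻¹)) :=
        le_mul_of_one_le_right (sqrt_nonneg _) (one_le_exp (by positivity))
    _ ≤ _ := sqrt_two_pi_mul_exp_le_sum_chi_mul_neg_pow hz (even_two_mul m)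

theorem chi_geometric_not_summable (κ : ℝ) (hκ1 : 1 < κ) (hκ : κ * Real.log κ - κ = 1)
    (x : ℝ) (hx : x ≤ -κ) :
    ¬ ∃ L : ℝ, Filter.Tendsto (fun n : ℕ => ∑ k ∈ Finset.range (n + 1), chi n k * x ^ k)
      Filter.atTop (nhds L) := by
  rintro ⟨L, hL⟩
  have hz : κ ≤ -x := le_neg_of_le_neg hx
  have hdiv := tendsto_sum_chi_mul_neg_pow_two_mul_atTop (by linarith)
    (log_sub_one_sub_inv_nonneg (by linarith) hκ hz)
  rw [neg_neg] at hdiv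
  exact not_tendsto_nhds_of_tendsto_atTop hdiv L (hL.comp (tendsto_id.const_mul_atTop' two_pos))
end

section
/- Fix a natural number k and real z ∈ [0,1]. As n → ∞ with j = ⌊z·n⌋, the normalized probability mass p_k(j; n) = C(n−j, k)/C(n, k+1), rescaled by n, converges to the density ρ_k(z) = (1+k)(1−z)^k; that is, n·C(n−⌊zn⌋, k)/C(n, k+1) → (1+k)(1−z)^k. -/
/-!
Writing binomial coefficients through descending factorials `(m)_k = m (m - 1) ⋯ (m - k + 1)`,
`n C(m, k) / C(n, k + 1) = (k + 1) · ((m)_k / n^k) / ((n)_{k+1} / n^{k+1})`, and `(u_n)_k / n^k → c^k`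
whenever `u_n / n → c`. With `u_n = n - ⌊z n⌋` the numerator tends to `(1 - z)^k`, with `u_n = n`
the denominator tends to `1`.
-/

open Filter Topology Polynomial

theorem tendsto_descPochhammer_eval_div_pow {x : ℕ → ℝ} {c : ℝ}
    (hx : Tendsto (fun n => x n / n) atTop (𝓝 c)) (k : ℕ) :
    Tendsto (fun n => (descPochhammer ℝ k).eval (x n) / (n : ℝ) ^ k) atTop (𝓝 (c ^ k)) := by
  induction k with
  | zero => simp
  | succ k ih =>
    have hfactor : Tendsto (fun n : ℕ => x n / n - k / n) atTop (𝓝 c) := by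
      simpa using hx.sub (tendsto_const_div_atTop_nhds_zero_nat (k : ℝ))
    refine (ih.mul hfactor).congr fun n => ?_
    rw [descPochhammer_succ_eval, pow_succ, ← sub_div, div_mul_div_comm]

theorem tendsto_descFactorial_div_pow {u : ℕ → ℕ} {c : ℝ}
    (hu : Tendsto (fun n => (u n : ℝ) / n) atTop (𝓝 c)) (k : ℕ) :
    Tendsto (fun n => ((u n).descFactorial k : ℝ) / (n : ℝ) ^ k) atTop (𝓝 (c ^ k)) := by
  simpa only [descPochhammer_eval_eq_descFactorial] using
    tendsto_descPochhammer_eval_div_pow hu k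

theorem tendsto_natCast_div_self_atTop :
    Tendsto (fun n : ℕ => (n : ℝ) / n) atTop (𝓝 1) :=
  tendsto_const_nhds.congr' <| (eventually_ne_atTop 0).mono fun _ hn =>
    (div_self (Nat.cast_ne_zero.mpr hn)).symm

theorem tendsto_sub_floor_mul_div_atTop {z : ℝ} (hz0 : 0 ≤ z) (hz1 : z ≤ 1) :
    Tendsto (fun n : ℕ => ((n - ⌊z * n⌋₊ : ℕ) : ℝ) / n) atTop (𝓝 (1 - z)) := by
  have hfloor : Tendsto (fun n : ℕ => (⌊z * n⌋₊ : ℝ) / n) atTop (𝓝 z) :=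
    (tendsto_nat_floor_mul_div_atTop hz0).comp tendsto_natCast_atTop_atTop
  refine (tendsto_natCast_div_self_atTop.sub hfloor).congr fun n => ?_
  have hle : ⌊z * n⌋₊ ≤ n :=
    Nat.floor_le_of_le (mul_le_of_le_one_left n.cast_nonneg hz1)
  rw [Nat.cast_sub hle, sub_div]

theorem natCast_mul_choose_div_choose_succ (m k : ℕ) {n : ℕ} (hn : n ≠ 0) :
    (n : ℝ) * m.choose k / n.choose (k + 1) =
      (k + 1) * ((m.descFactorial k : ℝ) / (n : ℝ) ^ k) /
        ((n.descFactorial (k + 1) : ℝ) / (n : ℝ) ^ (k + 1)) := by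
  simp only [Nat.cast_choose_eq_descPochhammer_div, descPochhammer_eval_eq_descFactorial,
    Nat.factorial_succ, Nat.cast_mul, pow_succ]
  field_simp
  push_cast
  ring

theorem choose_ratio_tendsto_density (k : ℕ) (z : ℝ) (hz0 : 0 ≤ z) (hz1 : z ≤ 1) :
    Filter.Tendsto
      (fun n : ℕ => (n : ℝ) * (Nat.choose (n - ⌊z * n⌋₊) k : ℝ) / (Nat.choose n (k + 1) : ℝ))
      Filter.atTop (nhds ((1 + k : ℝ) * (1 - z) ^ k)) := by
  rw [add_comm (1 : ℝ)]
  have hnum := tendsto_descFactorial_div_pow (tendsto_sub_floor_mul_div_atTop hz0 hz1) k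
  have hden := tendsto_descFactorial_div_pow (u := id) tendsto_natCast_div_self_atTop (k + 1)
  rw [one_pow] at hden
  have hlim := (hnum.const_mul ((k : ℝ) + 1)).div hden one_ne_zero
  rw [div_one] at hlim
  refine hlim.congr' <| (eventually_ne_atTop 0).mono fun n hn => ?_
  simpa only [Pi.div_apply, id] using
    (natCast_mul_choose_div_choose_succ _ k hn).symm
end
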